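/- arXiv:1204.2674 — 2 statements merged into one kernel-verified Lean document; each statement's English description precedes it below -/
import Mathlib

section
/- In the free unital associative ring ℤ⟨X⟩, for all elements a₁,...,a₅, the element 3·[a₁,a₂,a₃][a₄,a₅] lies in the ideal T⁽⁴⁾. -/
/-!
Modulo `T⁽⁴⁾` every commutator `[a,b,c]` of length 3 is central. Expanding the vanishing
commutators `[a,b,cd,e]` and `[ad,e,b,c]` by the Leibniz rule then shows that
`F(a,b,c,d,e) = [a,b,c][d,e]` changes sign under the transpositions `(34)` and `(14)` of its
arguments; it obviously does so under `(12)` and `(45)`, so `F` is alternating. The Jacobi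
identity `[a,b,c] + [b,c,a] + [c,a,b] = 0` is a sum over the even cyclic permutations of
`a, b, c`, hence becomes `3 F(a,b,c,d,e) = 0`.
-/

noncomputable section

/-- `ℤ⟨X⟩`, the free unital associative ring on a countable set `X = {x₀, x₁, …}`. -/
abbrev R : Type := FreeAlgebra ℤ ℕ

/-- The commutator `[a,b] = ab - ba`. -/
def br (a b : R) : R := a * b - b * a

/-- `T⁽⁴⁾`: the two-sided ideal generated by all left-normed commutators of length 4. -/
def T4 : TwoSidedIdeal R := TwoSidedIdeal.span {y | ∃ a b c d : R, y = br (br (br a b) c) d}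

namespace Ring

variable {A : Type*} [Ring A]

theorem lie_lie_lie_mul₃ (a b c d e : A) :
    ⁅⁅⁅a, b⁆, c * d⁆, e⁆ = c * ⁅⁅⁅a, b⁆, d⁆, e⁆ + ⁅c, e⁆ * ⁅⁅a, b⁆, d⁆
      + ⁅⁅a, b⁆, c⁆ * ⁅d, e⁆ + ⁅⁅⁅a, b⁆, c⁆, e⁆ * d := by
  simp only [Ring.lie_def]; noncomm_ring

theorem lie_lie_lie_mul₁ (a b c d e : A) :
    ⁅⁅⁅a * b, c⁆, d⁆, e⁆ = a * ⁅⁅⁅b, c⁆, d⁆, e⁆ + ⁅⁅⁅a, c⁆, d⁆, e⁆ * b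
      + ⁅a, e⁆ * ⁅⁅b, c⁆, d⁆ + ⁅a, d⁆ * ⁅⁅b, c⁆, e⁆ + ⁅⁅a, d⁆, e⁆ * ⁅b, c⁆
      + ⁅a, c⁆ * ⁅⁅b, d⁆, e⁆ + ⁅⁅a, c⁆, e⁆ * ⁅b, d⁆ + ⁅⁅a, c⁆, d⁆ * ⁅b, e⁆ := by
  simp only [Ring.lie_def]; noncomm_ring

theorem lie_lie_add_lie_lie_add_lie_lie (a b c : A) :
    ⁅⁅a, b⁆, c⁆ + ⁅⁅b, c⁆, a⁆ + ⁅⁅c, a⁆, b⁆ = 0 := by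
  simp only [Ring.lie_def]; noncomm_ring

end Ring

section LieNilpotent

variable {A : Type*} [Ring A]

def lieLieMulLie (a b c d e : A) : A := ⁅⁅a, b⁆, c⁆ * ⁅d, e⁆

theorem lieLieMulLie_swap₁₂ (a b c d e : A) :
    lieLieMulLie b a c d e = -lieLieMulLie a b c d e := by
  simp only [lieLieMulLie, Ring.lie_def]; noncomm_ring

theorem lieLieMulLie_swap₄₅ (a b c d e : A) :
    lieLieMulLie a b c e d = -lieLieMulLie a b c d e := by
  simp only [lieLieMulLie, Ring.lie_def]; noncomm_ring

variable (h : ∀ a b c d : A, ⁅⁅⁅a, b⁆, c⁆, d⁆ = 0)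
include h

theorem commute_lie_lie_of_lie_nilpotent (a b c x : A) : Commute ⁅⁅a, b⁆, c⁆ x :=
  commute_iff_lie_eq.2 (h a b c x)

theorem lieLieMulLie_swap₃₄ (a b c d e : A) :
    lieLieMulLie a b d c e = -lieLieMulLie a b c d e := by
  have := h a b (c * d) e
  rw [Ring.lie_lie_lie_mul₃, h, h, mul_zero, zero_mul, add_zero, zero_add,
    ← (commute_lie_lie_of_lie_nilpotent h a b d _).eq] at this
  exact eq_neg_of_add_eq_zero_left this

theorem lieLieMulLie_swap₃₅ (a b c d e : A) :
    lieLieMulLie a b e d c = -lieLieMulLie a b c d e := by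
  rw [lieLieMulLie_swap₃₄ h, lieLieMulLie_swap₄₅, lieLieMulLie_swap₃₄ h, neg_neg]

theorem lieLieMulLie_swap₁₄ (a b c d e : A) :
    lieLieMulLie d b c a e = -lieLieMulLie a b c d e := by
  -- Expand `⁅⁅⁅a * d, e⁆, b⁆, c⁆ = 0`: of its six surviving terms, two pairs cancel by `swap₃₅`.
  have := h (a * d) e b c
  rw [Ring.lie_lie_lie_mul₁, h, h, mul_zero, zero_mul, zero_add] at this
  have h₁ : ⁅a, c⁆ * ⁅⁅d, e⁆, b⁆ = lieLieMulLie d e b a c :=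
    (commute_lie_lie_of_lie_nilpotent h d e b _).eq.symm
  have h₂ : ⁅a, b⁆ * ⁅⁅d, e⁆, c⁆ = -lieLieMulLie d e b a c := by
    rw [← lieLieMulLie_swap₃₅ h]; exact (commute_lie_lie_of_lie_nilpotent h d e c _).eq.symm
  have h₄ : ⁅a, e⁆ * ⁅⁅d, b⁆, c⁆ = lieLieMulLie d b c a e :=
    (commute_lie_lie_of_lie_nilpotent h d b c _).eq.symm
  have h₆ : ⁅⁅a, e⁆, b⁆ * ⁅d, c⁆ = -(⁅⁅a, e⁆, c⁆ * ⁅d, b⁆) := lieLieMulLie_swap₃₅ h a e c d b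
  rw [h₁, h₂, h₄, h₆] at this
  rw [eq_neg_iff_add_eq_zero, ← this, lieLieMulLie]
  abel

theorem lieLieMulLie_cycle (a b c d e : A) : lieLieMulLie b c a d e = lieLieMulLie a b c d e :=
  calc lieLieMulLie b c a d e
    _ = -lieLieMulLie b c d a e := lieLieMulLie_swap₃₄ h b c d a e
    _ = lieLieMulLie a c d b e := (lieLieMulLie_swap₁₄ h b c d a e).symm
    _ = -lieLieMulLie c a d b e := lieLieMulLie_swap₁₂ c a d b e
    _ = lieLieMulLie b a d c e := (lieLieMulLie_swap₁₄ h c a d b e).symm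
    _ = -lieLieMulLie a b d c e := lieLieMulLie_swap₁₂ a b d c e
    _ = lieLieMulLie a b c d e := by rw [lieLieMulLie_swap₃₄ h, neg_neg]

theorem three_zsmul_lieLieMulLie (a b c d e : A) : (3 : ℤ) • lieLieMulLie a b c d e = 0 :=
  calc (3 : ℤ) • lieLieMulLie a b c d e
    _ = lieLieMulLie a b c d e + lieLieMulLie b c a d e + lieLieMulLie c a b d e := by
      rw [lieLieMulLie_cycle h a b c, ← lieLieMulLie_cycle h c a b]; abel
    _ = (⁅⁅a, b⁆, c⁆ + ⁅⁅b, c⁆, a⁆ + ⁅⁅c, a⁆, b⁆) * ⁅d, e⁆ := by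
      simp only [lieLieMulLie, add_mul]
    _ = 0 := by rw [Ring.lie_lie_add_lie_lie_add_lie_lie, zero_mul]

end LieNilpotent

theorem TwoSidedIdeal.three_zsmul_lie_lie_mul_lie_mem {A : Type*} [Ring A] (I : TwoSidedIdeal A)
    (hI : ∀ a b c d : A, ⁅⁅⁅a, b⁆, c⁆, d⁆ ∈ I) (a b c d e : A) :
    (3 : ℤ) • (⁅⁅a, b⁆, c⁆ * ⁅d, e⁆) ∈ I := by
  rw [← I.ker_ringCon_mk', mem_ker]
  have map_lie (x y : A) : I.ringCon.mk' ⁅x, y⁆ = ⁅I.ringCon.mk' x, I.ringCon.mk' y⁆ := by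
    simp only [Ring.lie_def, map_sub, map_mul]
  simp only [map_zsmul, map_mul, map_lie]
  refine three_zsmul_lieLieMulLie ?_ _ _ _ _ _
  intro x y z w
  obtain ⟨x, rfl⟩ := I.ringCon.mk'_surjective x
  obtain ⟨y, rfl⟩ := I.ringCon.mk'_surjective y
  obtain ⟨z, rfl⟩ := I.ringCon.mk'_surjective z
  obtain ⟨w, rfl⟩ := I.ringCon.mk'_surjective w
  simp only [← map_lie, ← mem_ker, ker_ringCon_mk', hI]

theorem stmt3 (a₁ a₂ a₃ a₄ a₅ : R) :
    (3 : ℤ) • (br (br a₁ a₂) a₃ * br a₄ a₅) ∈ T4 :=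
  T4.three_zsmul_lie_lie_mul_lie_mem (fun a b c d ↦ TwoSidedIdeal.subset_span ⟨a, b, c, d, rfl⟩)
    a₁ a₂ a₃ a₄ a₅
end
end

section
/- For every n ≥ 2, the additive subgroup Vₙ of multilinear Lie elements of degree n (elements of the free Lie ring L(X) that are multilinear in x₁,...,xₙ) is a free abelian group with basis the set of left-normed commutators [xₙ, x_{i₁}, ..., x_{i_{n−1}}] where (i₁,...,i_{n−1}) runs over all permutations of (1,...,n−1). -/
noncomputable section

/-- The free generators. -/
def x (i : ℕ) : R := FreeAlgebra.ι ℤ i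

attribute [local instance] LieRing.ofAssociativeRing

/-- `L(X)`: the free Lie ring on `X`, realized as the Lie subring of `ℤ⟨X⟩`
(with bracket `[a,b] = ab - ba`) generated by the free generators. -/
def L : LieSubalgebra ℤ R := LieSubalgebra.lieSpan ℤ R (Set.range x)

/-- `Pₙ`: the additive subgroup generated by the monomials of degree 1 in each of
`x₁, …, xₙ` containing no other variable. -/
def Pn (n : ℕ) : Submodule ℤ R :=
  Submodule.span ℤ
    {y | ∃ σ : Equiv.Perm (Fin n), y = (List.ofFn fun i => x ((σ i : ℕ) + 1)).prod}

/-- `Vₙ = L(X) ∩ Pₙ`. -/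
def Vn (n : ℕ) : Submodule ℤ R := L.toSubmodule ⊓ Pn n

/-!
Write `U` for the span of the left-normed commutators `[xₙ, x_{j₁}, …, x_{j_k}]`. By the Jacobi
identity `U` is stable under bracketing with `L(X)`, so `U + L(X ∖ {xₙ})` is a Lie subring; it
contains every generator, hence all of `L(X)`. Projecting an element of `Vₙ` onto the monomials
that are rearrangements of `x₁ ⋯ xₙ` kills the `L(X ∖ {xₙ})` part (none of its monomials
contains `xₙ`) and keeps exactly the commutators `[xₙ, x_{σ 1}, …, x_{σ (n-1)}]`, so these span
`Vₙ`. They are independent because `[xₙ, x_{j₁}, …, x_{j_k}]` is the monomial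
`xₙ x_{j₁} ⋯ x_{j_k}` plus monomials not beginning with `xₙ`.
-/

open Module Submodule

theorem FreeAlgebra.basisFreeMonoid_apply {K X : Type*} [CommSemiring K] (w : FreeMonoid X) :
    FreeAlgebra.basisFreeMonoid K X w = (w.toList.map (FreeAlgebra.ι K)).prod := by
  have hι (a : X) : FreeAlgebra.equivMonoidAlgebraFreeMonoid (FreeAlgebra.ι K a) =
      .single (FreeMonoid.of a) 1 := by
    simp [FreeAlgebra.equivMonoidAlgebraFreeMonoid, MonoidAlgebra.of_apply]
  rw [show FreeAlgebra.basisFreeMonoid K X w =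
      FreeAlgebra.equivMonoidAlgebraFreeMonoid.symm (.single w 1) by
    simp [FreeAlgebra.basisFreeMonoid], AlgEquiv.symm_apply_eq, map_list_prod, List.map_map]
  induction w using FreeMonoid.inductionOn' with
  | one => rfl
  | of_mul a w ih => simp [← ih, hι]

theorem List.Perm.exists_eq_ofFn_comp {α : Type*} {m : ℕ} {g : Fin m → α}
    (hg : Function.Injective g) {l : List α} (h : l.Perm (List.ofFn g)) :
    ∃ σ : Equiv.Perm (Fin m), l = List.ofFn (g ∘ σ) := by
  have hlen : l.length = m := by simpa using h.length_eq
  have hmem (i : Fin m) : ∃ j, g j = l[i] := List.mem_ofFn.1 (h.subset (List.getElem_mem _))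
  choose τ hτ using hmem
  have hτinj : Function.Injective τ := fun i i' hii' => by
    have := (h.nodup_iff.2 (List.nodup_ofFn.2 hg)).getElem_inj_iff.1
      ((hτ i).symm.trans ((congrArg g hii').trans (hτ i')))
    exact Fin.ext this
  refine ⟨Equiv.ofBijective τ hτinj.bijective_of_finite, List.ext_getElem (by simp [hlen]) ?_⟩
  intro i h₁ h₂
  simp [hτ]

theorem List.range'_one_eq_ofFn (m : ℕ) :
    List.range' 1 m = List.ofFn fun i : Fin m => (i : ℕ) + 1 := by
  apply List.ext_getElem <;> simp [add_comm]

theorem List.range'_one_perm_cons {n : ℕ} (hn : 1 ≤ n) :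
    (List.range' 1 n).Perm (n :: List.range' 1 (n - 1)) := by
  obtain ⟨m, rfl⟩ := Nat.exists_eq_add_of_le' hn
  rw [List.range'_concat]
  simp [add_comm]

section LieSpan

variable {k A : Type*} [CommRing k] [LieRing A] [LieAlgebra k A]

theorem lie_mem_span_of_mem_lieSpan {s g : Set A} (hg : ∀ u ∈ g, ∀ a ∈ s, ⁅u, a⁆ ∈ span k g)
    {u m : A} (hu : u ∈ span k g) (hm : m ∈ LieSubalgebra.lieSpan k A s) : ⁅u, m⁆ ∈ span k g := by
  have hgen (a : A) (ha : a ∈ s) {u : A} (hu : u ∈ span k g) : ⁅u, a⁆ ∈ span k g := by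
    induction hu using span_induction with
    | mem u hu => exact hg u hu a ha
    | zero => simp
    | add u v _ _ hu hv => rw [add_lie]; exact add_mem hu hv
    | smul c u _ hu => rw [smul_lie]; exact smul_mem _ c hu
  let S : LieSubalgebra k A :=
    { carrier := {m | ∀ u ∈ span k g, ⁅u, m⁆ ∈ span k g}
      add_mem' := fun ha hb u hu => by rw [lie_add]; exact add_mem (ha u hu) (hb u hu)
      zero_mem' := fun u _ => by simp
      smul_mem' := fun c a ha u hu => by rw [lie_smul]; exact smul_mem _ c (ha u hu)
      lie_mem' := fun {a b} ha hb u hu => by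
        rw [leibniz_lie, ← lie_skew a, ← sub_eq_add_neg]
        exact sub_mem (hb _ (ha u hu)) (ha _ (hb u hu)) }
  exact (LieSubalgebra.lieSpan_le (K := S).2 fun a ha u hu => hgen a ha hu) hm u hu

theorem toSubmodule_lieSpan_le_span_sup {s t g : Set A}
    (hg : ∀ u ∈ g, ∀ a ∈ s, ⁅u, a⁆ ∈ span k g) (hgs : g ⊆ LieSubalgebra.lieSpan k A s)
    (hts : t ⊆ s) (hst : s ⊆ g ∪ t) :
    (LieSubalgebra.lieSpan k A s).toSubmodule ≤
      span k g ⊔ (LieSubalgebra.lieSpan k A t).toSubmodule := by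
  have hspan : span k g ≤ (LieSubalgebra.lieSpan k A s).toSubmodule := span_le.2 hgs
  have htle : LieSubalgebra.lieSpan k A t ≤ LieSubalgebra.lieSpan k A s :=
    LieSubalgebra.lieSpan_mono hts
  let T : LieSubalgebra k A :=
    { toSubmodule := span k g ⊔ (LieSubalgebra.lieSpan k A t).toSubmodule
      lie_mem' := fun {a b} ha hb => by
        obtain ⟨u₁, hu₁, m₁, hm₁, rfl⟩ := mem_sup.1 ha
        obtain ⟨u₂, hu₂, m₂, hm₂, rfl⟩ := mem_sup.1 hb
        have hlie {u m : A} (hu : u ∈ span k g) (hm : m ∈ LieSubalgebra.lieSpan k A s) :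
            ⁅u, m⁆ ∈ span k g := lie_mem_span_of_mem_lieSpan hg hu hm
        rw [lie_add, add_lie, add_lie, ← lie_skew m₁ u₂]
        show _ ∈ span k g ⊔ (LieSubalgebra.lieSpan k A t).toSubmodule
        refine add_mem (add_mem ?_ ?_) (add_mem ?_ ?_)
        · exact mem_sup_left (hlie hu₁ (hspan hu₂))
        · exact mem_sup_left (neg_mem (hlie hu₂ (htle hm₁)))
        · exact mem_sup_left (hlie hu₁ (htle hm₂))
        · exact mem_sup_right ((LieSubalgebra.lieSpan k A t).lie_mem hm₁ hm₂) }
  refine LieSubalgebra.lieSpan_le (K := T).2 fun a ha => ?_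
  rcases hst ha with ha | ha
  · exact mem_sup_left (subset_span ha)
  · exact mem_sup_right (LieSubalgebra.subset_lieSpan ha)

end LieSpan

def permWord {m : ℕ} (σ : Equiv.Perm (Fin m)) : List ℕ := List.ofFn fun i => (σ i : ℕ) + 1

theorem permWord_perm_range' {m : ℕ} (σ : Equiv.Perm (Fin m)) :
    (permWord σ).Perm (List.range' 1 m) :=
  List.range'_one_eq_ofFn m ▸ σ.ofFn_comp_perm fun i : Fin m => (i : ℕ) + 1

theorem exists_permWord_eq_of_perm {m : ℕ} {l : List ℕ} (h : l.Perm (List.range' 1 m)) :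
    ∃ σ : Equiv.Perm (Fin m), permWord σ = l := by
  rw [List.range'_one_eq_ofFn] at h
  obtain ⟨σ, rfl⟩ := h.exists_eq_ofFn_comp fun i j hij => Fin.ext (by simpa using hij)
  exact ⟨σ, rfl⟩

theorem permWord_injective (m : ℕ) : Function.Injective (permWord (m := m)) := fun σ τ h =>
  Equiv.ext fun i => Fin.ext (by simpa using congrFun (List.ofFn_injective h) i)

theorem self_notMem_permWord {n : ℕ} (σ : Equiv.Perm (Fin (n - 1))) : n ∉ permWord σ := by
  simp only [permWord, List.mem_ofFn, not_exists]
  intro i h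
  have := (σ i).isLt
  omega

def word (l : List ℕ) : R := (l.map x).prod

theorem x_eq_word (i : ℕ) : x i = word [i] := by simp [word]

theorem word_append (l l' : List ℕ) : word (l ++ l') = word l * word l' := by
  simp [word]

theorem basisFreeMonoid_eq_word (w : FreeMonoid ℕ) :
    FreeAlgebra.basisFreeMonoid ℤ ℕ w = word w.toList :=
  FreeAlgebra.basisFreeMonoid_apply w

theorem span_range_word : span ℤ (Set.range word) = ⊤ := by
  have hrange : Set.range word = Set.range (FreeAlgebra.basisFreeMonoid ℤ ℕ) := by
    ext r
    simp only [Set.mem_range, basisFreeMonoid_eq_word]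
    exact ⟨fun ⟨l, hl⟩ => ⟨FreeMonoid.ofList l, hl⟩, fun ⟨w, hw⟩ => ⟨w.toList, hw⟩⟩
  exact hrange ▸ (FreeAlgebra.basisFreeMonoid ℤ ℕ).span_eq

theorem mul_mem_span_word {A B C : Set (List ℕ)} (hABC : ∀ a ∈ A, ∀ b ∈ B, a ++ b ∈ C) {r s : R}
    (hr : r ∈ span ℤ (word '' A)) (hs : s ∈ span ℤ (word '' B)) : r * s ∈ span ℤ (word '' C) := by
  refine span_mono ?_ ((span_mul_span ℤ (word '' A) (word '' B)).le (mul_mem_mul hr hs))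
  rintro _ ⟨_, ⟨a, ha, rfl⟩, _, ⟨b, hb, rfl⟩, rfl⟩
  exact ⟨a ++ b, hABC a ha b hb, word_append a b⟩

def multihomogeneous (l₀ : List ℕ) : Submodule ℤ R := span ℤ (word '' {l | l.Perm l₀})

theorem multihomogeneous_congr {l₀ l₁ : List ℕ} (h : l₀.Perm l₁) :
    multihomogeneous l₀ = multihomogeneous l₁ := by
  have hclass : {l : List ℕ | l.Perm l₀} = {l | l.Perm l₁} :=
    Set.ext fun _ => ⟨fun h' => h'.trans h, fun h' => h'.trans h.symm⟩
  rw [multihomogeneous, multihomogeneous, hclass]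

theorem mul_mem_multihomogeneous {l₀ l₁ : List ℕ} {r s : R} (hr : r ∈ multihomogeneous l₀)
    (hs : s ∈ multihomogeneous l₁) : r * s ∈ multihomogeneous (l₀ ++ l₁) := by
  unfold multihomogeneous at *
  exact mul_mem_span_word (C := {l | l.Perm (l₀ ++ l₁)}) (fun _ ha _ hb => ha.append hb) hr hs

theorem lie_mem_multihomogeneous {l₀ l₁ : List ℕ} {r s : R} (hr : r ∈ multihomogeneous l₀)
    (hs : s ∈ multihomogeneous l₁) : ⁅r, s⁆ ∈ multihomogeneous (l₀ ++ l₁) := by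
  rw [Ring.lie_def]
  refine sub_mem (mul_mem_multihomogeneous hr hs) ?_
  rw [multihomogeneous_congr List.perm_append_comm]
  exact mul_mem_multihomogeneous hs hr

def wordsAvoiding (a : ℕ) : LieSubalgebra ℤ R where
  toSubmodule := span ℤ (word '' {l | a ∉ l})
  lie_mem' {r s} hr hs := by
    have hmul {r s : R} (hr : r ∈ span ℤ (word '' {l | a ∉ l}))
        (hs : s ∈ span ℤ (word '' {l | a ∉ l})) : r * s ∈ span ℤ (word '' {l | a ∉ l}) :=
      mul_mem_span_word (C := {l | a ∉ l}) (fun l hl l' hl' h => (List.mem_append.1 h).elim hl hl')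
        hr hs
    exact sub_mem (hmul hr hs) (hmul hs hr)

theorem lieSpan_le_wordsAvoiding (a : ℕ) :
    LieSubalgebra.lieSpan ℤ R (x '' {i | i ≠ a}) ≤ wordsAvoiding a := by
  refine LieSubalgebra.lieSpan_le.2 ?_
  rintro _ ⟨i, hi, rfl⟩
  exact subset_span ⟨[i], by simpa using Ne.symm hi, (x_eq_word i).symm⟩

def multihomogeneousProj (l₀ : List ℕ) : R →ₗ[ℤ] R :=
  (FreeAlgebra.basisFreeMonoid ℤ ℕ).constr ℤ fun w => if w.toList.Perm l₀ then word w.toList else 0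

theorem multihomogeneousProj_word (l₀ l : List ℕ) :
    multihomogeneousProj l₀ (word l) = if l.Perm l₀ then word l else 0 := by
  have := (FreeAlgebra.basisFreeMonoid ℤ ℕ).constr_basis ℤ
    (fun w => if w.toList.Perm l₀ then word w.toList else 0) (FreeMonoid.ofList l)
  rw [basisFreeMonoid_eq_word] at this
  exact this

theorem multihomogeneousProj_of_mem {l₀ l₁ : List ℕ} {r : R} (hr : r ∈ multihomogeneous l₁) :
    multihomogeneousProj l₀ r = if l₁.Perm l₀ then r else 0 := by
  split_ifs with h
  · refine LinearMap.eqOn_span' (g := LinearMap.id) ?_ hr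
    rintro _ ⟨l, hl, rfl⟩
    rw [multihomogeneousProj_word, if_pos (List.Perm.trans hl h), LinearMap.id_apply]
  · refine LinearMap.eqOn_span' (g := 0) ?_ hr
    rintro _ ⟨l, hl, rfl⟩
    rw [multihomogeneousProj_word, if_neg fun h' => h (hl.symm.trans h'), LinearMap.zero_apply]

theorem multihomogeneousProj_eq_zero_of_mem_wordsAvoiding {l₀ : List ℕ} {a : ℕ} (ha : a ∈ l₀)
    {r : R} (hr : r ∈ (wordsAvoiding a).toSubmodule) : multihomogeneousProj l₀ r = 0 := by
  refine span_le (p := LinearMap.ker (multihomogeneousProj l₀)) |>.2 ?_ hr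
  rintro _ ⟨l, hl, rfl⟩
  rw [SetLike.mem_coe, LinearMap.mem_ker, multihomogeneousProj_word,
    if_neg fun h => hl (h.mem_iff.2 ha)]

def leftNormed (a : ℕ) (l : List ℕ) : R := (l.map x).foldl br (x a)

theorem leftNormed_append_singleton (a : ℕ) (l : List ℕ) (j : ℕ) :
    leftNormed a (l ++ [j]) = ⁅leftNormed a l, x j⁆ := by
  rw [leftNormed, leftNormed, List.map_append, List.foldl_append]
  rfl

theorem leftNormed_mem_L (a : ℕ) (l : List ℕ) : leftNormed a l ∈ L := by
  induction l using List.reverseRecOn with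
  | nil => exact LieSubalgebra.subset_lieSpan ⟨a, rfl⟩
  | append_singleton l j ih =>
    rw [leftNormed_append_singleton]
    exact L.lie_mem ih (LieSubalgebra.subset_lieSpan ⟨j, rfl⟩)

theorem x_mem_multihomogeneous (i : ℕ) : x i ∈ multihomogeneous [i] :=
  subset_span ⟨[i], List.Perm.refl _, (x_eq_word i).symm⟩

theorem leftNormed_mem_multihomogeneous (a : ℕ) (l : List ℕ) :
    leftNormed a l ∈ multihomogeneous (a :: l) := by
  induction l using List.reverseRecOn with
  | nil => exact x_mem_multihomogeneous a
  | append_singleton l j ih =>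
    rw [leftNormed_append_singleton, ← List.cons_append]
    exact lie_mem_multihomogeneous ih (x_mem_multihomogeneous j)

theorem leftNormed_sub_word_mem {a : ℕ} {l : List ℕ} (ha : a ∉ l) :
    leftNormed a l - word (a :: l) ∈ span ℤ (word '' {v | v.head? ≠ some a}) := by
  induction l using List.reverseRecOn with
  | nil => simp [leftNormed, x_eq_word]
  | append_singleton l j ih =>
    have hj : j ≠ a := fun h => ha (by simp [h])
    have hx : x j ∈ span ℤ (word '' {[j]}) := subset_span ⟨[j], rfl, (x_eq_word j).symm⟩
    have htop : leftNormed a l ∈ span ℤ (word '' Set.univ) := by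
      rw [Set.image_univ, span_range_word]; trivial
    have hexpand : leftNormed a (l ++ [j]) - word (a :: (l ++ [j])) =
        (leftNormed a l - word (a :: l)) * x j - x j * leftNormed a l := by
      rw [leftNormed_append_singleton, Ring.lie_def, ← List.cons_append, word_append, ← x_eq_word]
      noncomm_ring
    rw [hexpand]
    refine sub_mem (mul_mem_span_word ?_ (ih fun h => ha (by simp [h])) hx)
      (mul_mem_span_word ?_ hx htop)
    · rintro v hv _ rfl
      cases v <;> simp_all [eq_comm]
    · rintro _ rfl v -
      simpa using hj

def wordCoeff (w : List ℕ) : R →ₗ[ℤ] ℤ :=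
  (FreeAlgebra.basisFreeMonoid ℤ ℕ).coord (FreeMonoid.ofList w)

theorem wordCoeff_word (w v : List ℕ) : wordCoeff w (word v) = if v = w then 1 else 0 := by
  classical
  change (FreeAlgebra.basisFreeMonoid ℤ ℕ).repr (word v) (FreeMonoid.ofList w) = _
  rw [← FreeMonoid.toList_ofList v, ← basisFreeMonoid_eq_word, Basis.repr_self,
    Finsupp.single_apply, FreeMonoid.toList_ofList]
  exact if_congr FreeMonoid.ofList.injective.eq_iff rfl rfl

theorem wordCoeff_leftNormed {a : ℕ} {l : List ℕ} (ha : a ∉ l) (l' : List ℕ) :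
    wordCoeff (a :: l') (leftNormed a l) = if l = l' then 1 else 0 := by
  have hlower :
      span ℤ (word '' {v | v.head? ≠ some a}) ≤ LinearMap.ker (wordCoeff (a :: l')) := by
    refine span_le.2 ?_
    rintro _ ⟨v, hv, rfl⟩
    rw [SetLike.mem_coe, LinearMap.mem_ker, wordCoeff_word, if_neg]
    rintro rfl
    exact hv rfl
  have hsplit := hlower (leftNormed_sub_word_mem ha)
  rw [LinearMap.mem_ker, map_sub, sub_eq_zero, wordCoeff_word] at hsplit
  simp [hsplit]

theorem word_permWord {m : ℕ} (σ : Equiv.Perm (Fin m)) :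
    word (permWord σ) = (List.ofFn fun i => x ((σ i : ℕ) + 1)).prod := by
  simp [word, permWord, List.map_ofFn, Function.comp_def]

theorem Pn_eq_multihomogeneous (n : ℕ) : Pn n = multihomogeneous (List.range' 1 n) := by
  unfold Pn multihomogeneous
  congr 1
  ext y
  constructor
  · rintro ⟨σ, rfl⟩
    exact ⟨permWord σ, permWord_perm_range' σ, word_permWord σ⟩
  · rintro ⟨l, hl, rfl⟩
    obtain ⟨σ, rfl⟩ := exists_permWord_eq_of_perm hl
    exact ⟨σ, word_permWord σ⟩

theorem L_le_span_leftNormed_sup (a : ℕ) :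
    L.toSubmodule ≤ span ℤ (Set.range (leftNormed a)) ⊔ (wordsAvoiding a).toSubmodule := by
  refine (toSubmodule_lieSpan_le_span_sup (s := Set.range x) (t := x '' {i | i ≠ a})
    ?_ ?_ ?_ ?_).trans (sup_le_sup_left (fun _ h => lieSpan_le_wordsAvoiding a h) _)
  · rintro _ ⟨l, rfl⟩ _ ⟨j, rfl⟩
    exact subset_span ⟨l ++ [j], leftNormed_append_singleton a l j⟩
  · rintro _ ⟨l, rfl⟩
    exact leftNormed_mem_L a l
  · rintro _ ⟨i, -, rfl⟩
    exact ⟨i, rfl⟩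
  · rintro _ ⟨i, rfl⟩
    by_cases hi : i = a
    · exact Or.inl ⟨[], by simp [leftNormed, hi]⟩
    · exact Or.inr ⟨i, hi, rfl⟩

theorem multihomogeneousProj_leftNormed_mem {n : ℕ} (hn : 1 ≤ n) (l : List ℕ) :
    multihomogeneousProj (List.range' 1 n) (leftNormed n l) ∈
      span ℤ (Set.range fun σ : Equiv.Perm (Fin (n - 1)) => leftNormed n (permWord σ)) := by
  rw [multihomogeneousProj_of_mem (leftNormed_mem_multihomogeneous n l)]
  split_ifs with h
  · obtain ⟨σ, rfl⟩ :=
      exists_permWord_eq_of_perm ((List.perm_cons n).1 (h.trans (List.range'_one_perm_cons hn)))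
    exact subset_span ⟨σ, rfl⟩
  · exact zero_mem _

theorem Vn_le_span_leftNormed_permWord {n : ℕ} (hn : 1 ≤ n) :
    Vn n ≤ span ℤ (Set.range fun σ : Equiv.Perm (Fin (n - 1)) => leftNormed n (permWord σ)) := by
  rintro v ⟨hvL, hvP⟩
  obtain ⟨u, hu, m, hm, rfl⟩ := mem_sup.1 (L_le_span_leftNormed_sup n hvL)
  rw [SetLike.mem_coe, Pn_eq_multihomogeneous] at hvP
  have hfix := multihomogeneousProj_of_mem (l₀ := List.range' 1 n) hvP
  rw [if_pos (List.Perm.refl _)] at hfix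
  rw [← hfix, map_add, multihomogeneousProj_eq_zero_of_mem_wordsAvoiding
    (List.mem_range'_1.2 ⟨hn, by omega⟩) hm, add_zero]
  refine span_le (p := (span ℤ _).comap (multihomogeneousProj (List.range' 1 n))) |>.2 ?_ hu
  rintro _ ⟨l, rfl⟩
  exact multihomogeneousProj_leftNormed_mem hn l

theorem leftNormed_permWord_mem_Vn {n : ℕ} (hn : 1 ≤ n) (σ : Equiv.Perm (Fin (n - 1))) :
    leftNormed n (permWord σ) ∈ Vn n := by
  refine ⟨leftNormed_mem_L n _, ?_⟩
  rw [SetLike.mem_coe, Pn_eq_multihomogeneous, multihomogeneous_congr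
    ((List.range'_one_perm_cons hn).trans ((permWord_perm_range' σ).cons n).symm)]
  exact leftNormed_mem_multihomogeneous n _

theorem linearIndependent_leftNormed_permWord (n : ℕ) :
    LinearIndependent ℤ fun σ : Equiv.Perm (Fin (n - 1)) => leftNormed n (permWord σ) := by
  classical
  let coeffs : R →ₗ[ℤ] Equiv.Perm (Fin (n - 1)) → ℤ :=
    LinearMap.pi fun τ => wordCoeff (n :: permWord τ)
  have hcoeffs : coeffs ∘ (fun σ => leftNormed n (permWord σ)) = fun σ => Pi.single σ 1 := by
    ext σ τ
    simp [coeffs, wordCoeff_leftNormed (self_notMem_permWord σ), (permWord_injective _).eq_iff,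
      Pi.single_apply, eq_comm]
  exact .of_comp coeffs (hcoeffs ▸ Pi.linearIndependent_single_one _ ℤ)

/-- For each `n ≥ 2`, `Vₙ` is free abelian with basis the left-normed commutators
`[xₙ, x_{i₁}, …, x_{i_{n-1}}]`, `(i₁, …, i_{n-1})` a permutation of `(1, …, n-1)`. -/
theorem stmt9 (n : ℕ) (hn : 2 ≤ n) :
    ∃ b : Module.Basis (Equiv.Perm (Fin (n - 1))) ℤ (Vn n),
      ∀ σ : Equiv.Perm (Fin (n - 1)),
        (b σ : R) = (List.ofFn fun j : Fin (n - 1) => x ((σ j : ℕ) + 1)).foldl br (x n) := by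
  have hn₁ : 1 ≤ n := by omega
  have hspan : span ℤ (Set.range fun σ => leftNormed n (permWord σ)) = Vn n :=
    le_antisymm (span_le.2 (Set.range_subset_iff.2 (leftNormed_permWord_mem_Vn hn₁)))
      (Vn_le_span_leftNormed_permWord hn₁)
  refine ⟨(Basis.span (linearIndependent_leftNormed_permWord n)).map (LinearEquiv.ofEq _ _ hspan),
    fun σ => ?_⟩
  rw [Basis.map_apply, LinearEquiv.coe_ofEq_apply, Basis.span_apply]
  simp only [leftNormed, permWord, List.map_ofFn]
  rfl
end
end
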